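/- Let s₁ and s₂ be two σ-additive measures on a σ-complete MV-algebra E. Then s₁ ≪ s₂ if and only if s₁ ≪_ε s₂. -/
import Mathlib


universe u

/-- An MV-algebra `(M; ⊕, ¬, 0)`. -/
structure MVAlgebra (M : Type u) where
  oplus : M → M → M
  neg : M → M
  zero : M
  oplus_comm : ∀ a b : M, oplus a b = oplus b a
  oplus_assoc : ∀ a b c : M, oplus (oplus a b) c = oplus a (oplus b c)
  oplus_zero : ∀ a : M, oplus a zero = a
  neg_neg : ∀ a : M, neg (neg a) = a
  oplus_one : ∀ a : M, oplus a (neg zero) = neg zero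
  luk : ∀ a b : M, oplus (neg (oplus (neg a) b)) b = oplus (neg (oplus (neg b) a)) a

namespace MVAlgebra

variable {M : Type u}

/-- `1 = ¬0`. -/
def one (A : MVAlgebra M) : M := A.neg A.zero

/-- `a ≤ b` iff `¬a ⊕ b = 1`. -/
def le (A : MVAlgebra M) (a b : M) : Prop := A.oplus (A.neg a) b = A.one

/-- `s` is the supremum of `S`. -/
def IsLUBmv (A : MVAlgebra M) (S : Set M) (s : M) : Prop :=
  (∀ x ∈ S, A.le x s) ∧ ∀ b : M, (∀ x ∈ S, A.le x b) → A.le s b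

/-- `M` is σ-complete: every sequence in `M` has a supremum. -/
def SigmaComplete (A : MVAlgebra M) : Prop :=
  ∀ a_ : ℕ → M, ∃ s : M, IsLUBmv A (Set.range a_) s

/-- A measure on an MV-algebra: nonnegative and additive on sums `a ⊕ b` with `a ≤ ¬b`. -/
def IsMeasure (A : MVAlgebra M) (m : M → ℝ) : Prop :=
  (∀ a : M, 0 ≤ m a) ∧ ∀ a b : M, A.le a (A.neg b) → m (A.oplus a b) = m a + m b

/-- A σ-additive measure: continuous on increasing sequences with suprema. -/
def SigmaAdditive (A : MVAlgebra M) (m : M → ℝ) : Prop :=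
  ∀ (a_ : ℕ → M) (a : M), (∀ n : ℕ, A.le (a_ n) (a_ (n + 1))) →
    IsLUBmv A (Set.range a_) a →
    Filter.Tendsto (fun n => m (a_ n)) Filter.atTop (nhds (m a))

end MVAlgebra

open MVAlgebra

namespace MVAux

open MVAlgebra

variable {M : Type u}

lemma zero_oplus' (A : MVAlgebra M) (a : M) : A.oplus A.zero a = a := by
  rw [A.oplus_comm, A.oplus_zero]

lemma oplus_one' (A : MVAlgebra M) (a : M) : A.oplus a A.one = A.one := A.oplus_one a

lemma one_oplus' (A : MVAlgebra M) (a : M) : A.oplus A.one a = A.one := by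
  rw [A.oplus_comm]; exact A.oplus_one a

lemma neg_one (A : MVAlgebra M) : A.neg A.one = A.zero := A.neg_neg A.zero

lemma le_refl' (A : MVAlgebra M) (a : M) : A.le a a := by
  have h := A.luk A.one a
  rw [neg_one, zero_oplus', oplus_one'] at h
  exact h

lemma le_iff_exists (A : MVAlgebra M) (a b : M) : A.le a b ↔ ∃ c, A.oplus a c = b := by
  constructor
  · intro h
    refine ⟨A.neg (A.oplus a (A.neg b)), ?_⟩
    have hl := A.luk b a
    rw [show A.oplus (A.neg a) b = A.one from h, neg_one, zero_oplus'] at hl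
    rw [A.oplus_comm (A.neg b) a] at hl
    rw [A.oplus_comm]
    exact hl
  · rintro ⟨c, rfl⟩
    show A.oplus (A.neg a) (A.oplus a c) = A.one
    rw [← A.oplus_assoc, show A.oplus (A.neg a) a = A.one from le_refl' A a, one_oplus']

lemma le_trans' (A : MVAlgebra M) {a b c : M} (h1 : A.le a b) (h2 : A.le b c) : A.le a c := by
  rw [le_iff_exists] at h1 h2 ⊢
  obtain ⟨x, rfl⟩ := h1
  obtain ⟨y, rfl⟩ := h2
  exact ⟨A.oplus x y, (A.oplus_assoc a x y).symm⟩

lemma le_neg_iff (A : MVAlgebra M) (a b : M) : A.le (A.neg b) (A.neg a) ↔ A.le a b := by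
  unfold MVAlgebra.le
  rw [A.neg_neg, A.oplus_comm]

lemma le_one' (A : MVAlgebra M) (a : M) : A.le a A.one := A.oplus_one _

lemma le_oplus_left (A : MVAlgebra M) (a c : M) : A.le a (A.oplus a c) :=
  (le_iff_exists A _ _).mpr ⟨c, rfl⟩

lemma oplus_le_oplus_left (A : MVAlgebra M) {a b : M} (c : M) (h : A.le a b) :
    A.le (A.oplus c a) (A.oplus c b) := by
  rw [le_iff_exists] at h ⊢
  obtain ⟨x, rfl⟩ := h
  exact ⟨x, A.oplus_assoc c a x⟩

lemma oplus_le_oplus_right (A : MVAlgebra M) {a b : M} (c : M) (h : A.le a b) :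
    A.le (A.oplus a c) (A.oplus b c) := by
  rw [A.oplus_comm a c, A.oplus_comm b c]
  exact oplus_le_oplus_left A c h

/-- join -/
def vee (A : MVAlgebra M) (a b : M) : M := A.oplus (A.neg (A.oplus (A.neg a) b)) b

lemma vee_comm (A : MVAlgebra M) (a b : M) : vee A a b = vee A b a := A.luk a b

lemma le_vee_right (A : MVAlgebra M) (a b : M) : A.le b (vee A a b) := by
  rw [le_iff_exists]
  exact ⟨A.neg (A.oplus (A.neg a) b), A.oplus_comm _ _⟩

lemma le_vee_left (A : MVAlgebra M) (a b : M) : A.le a (vee A a b) := by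
  rw [vee_comm]; exact le_vee_right A b a

lemma vee_le (A : MVAlgebra M) {a b z : M} (ha : A.le a z) (hb : A.le b z) :
    A.le (vee A a b) z := by
  have h1 : A.le (A.oplus (A.neg z) b) (A.oplus (A.neg a) b) := by
    apply oplus_le_oplus_right
    rwa [le_neg_iff]
  have h2 : A.le (A.neg (A.oplus (A.neg a) b)) (A.neg (A.oplus (A.neg z) b)) := by
    rwa [le_neg_iff]
  have h3 : A.le (vee A a b) (vee A z b) := oplus_le_oplus_right A b h2
  have h4 : vee A z b = z := by
    rw [vee_comm]
    show A.oplus (A.neg (A.oplus (A.neg b) z)) z = z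
    rw [show A.oplus (A.neg b) z = A.one from hb, neg_one, zero_oplus']
  rwa [h4] at h3

lemma vee_le_oplus (A : MVAlgebra M) (a b : M) : A.le (vee A a b) (A.oplus a b) := by
  have h : A.le (A.neg (A.oplus (A.neg a) b)) a := by
    have := (le_neg_iff A (A.neg a) (A.oplus (A.neg a) b)).mpr (le_oplus_left A (A.neg a) b)
    rwa [A.neg_neg] at this
  exact oplus_le_oplus_right A b h

/-! measure lemmas -/

lemma m_neg_add (A : MVAlgebra M) {m : M → ℝ} (hm : IsMeasure A m) (a : M) :
    m a + m (A.neg a) = m A.one := by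
  have hle : A.le a (A.neg (A.neg a)) := by rw [A.neg_neg]; exact le_refl' A a
  have h := hm.2 a (A.neg a) hle
  rw [show A.oplus a (A.neg a) = A.one by rw [A.oplus_comm]; exact le_refl' A a] at h
  linarith

lemma m_diff (A : MVAlgebra M) {m : M → ℝ} (hm : IsMeasure A m) {a b : M} (h : A.le a b) :
    m b = m a + m (A.neg (A.oplus a (A.neg b))) := by
  have hle : A.le a (A.neg (A.neg (A.oplus a (A.neg b)))) := by
    rw [A.neg_neg]; exact le_oplus_left A a _
  have hadd := hm.2 a _ hle
  have heq : A.oplus a (A.neg (A.oplus a (A.neg b))) = b := by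
    have hl := A.luk b a
    rw [show A.oplus (A.neg a) b = A.one from h, neg_one, zero_oplus'] at hl
    rw [A.oplus_comm (A.neg b) a] at hl
    rw [A.oplus_comm]
    exact hl
  rw [heq] at hadd
  exact hadd

lemma m_mono (A : MVAlgebra M) {m : M → ℝ} (hm : IsMeasure A m) {a b : M} (h : A.le a b) :
    m a ≤ m b := by
  have hd := m_diff A hm h
  have := hm.1 (A.neg (A.oplus a (A.neg b)))
  linarith

lemma m_subadd (A : MVAlgebra M) {m : M → ℝ} (hm : IsMeasure A m) (a b : M) :
    m (A.oplus a b) ≤ m a + m b := by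
  have h : A.le a (A.oplus a b) := le_oplus_left A a b
  have hd := m_diff A hm h
  have hx : A.le (A.neg b) (A.oplus a (A.neg (A.oplus a b))) := by
    have heq : A.oplus a (A.neg (A.oplus a b)) = vee A (A.neg b) a := by
      unfold vee
      rw [A.neg_neg, A.oplus_comm b a, A.oplus_comm]
    rw [heq]
    exact le_vee_left A (A.neg b) a
  have hc := (le_neg_iff A _ _).mpr hx
  rw [A.neg_neg] at hc
  have hmb := m_mono A hm hc
  linarith

lemma m_vee_le (A : MVAlgebra M) {m : M → ℝ} (hm : IsMeasure A m) (a b : M) :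
    m (vee A a b) ≤ m a + m b :=
  le_trans (m_mono A hm (vee_le_oplus A a b)) (m_subadd A hm a b)

/-! finite joins -/

def joinUpTo (A : MVAlgebra M) (a_ : ℕ → M) (n : ℕ) : ℕ → M
  | 0 => a_ n
  | k + 1 => vee A (joinUpTo A a_ n k) (a_ (n + k + 1))

lemma joinUpTo_mono (A : MVAlgebra M) (a_ : ℕ → M) (n k : ℕ) :
    A.le (joinUpTo A a_ n k) (joinUpTo A a_ n (k + 1)) :=
  le_vee_left A _ _

lemma le_joinUpTo (A : MVAlgebra M) (a_ : ℕ → M) (n : ℕ) :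
    ∀ k j, j ≤ k → A.le (a_ (n + j)) (joinUpTo A a_ n k) := by
  intro k
  induction k with
  | zero =>
    intro j hj
    interval_cases j
    exact le_refl' A _
  | succ k ih =>
    intro j hj
    rcases Nat.lt_or_ge j (k + 1) with h | h
    · exact le_trans' A (ih j (Nat.lt_succ_iff.mp h)) (joinUpTo_mono A a_ n k)
    · have : j = k + 1 := le_antisymm hj h
      subst this
      show A.le (a_ (n + k + 1)) _
      exact le_vee_right A _ _

lemma joinUpTo_le (A : MVAlgebra M) (a_ : ℕ → M) (n : ℕ) {z : M} :
    ∀ k, (∀ j, j ≤ k → A.le (a_ (n + j)) z) → A.le (joinUpTo A a_ n k) z := by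
  intro k
  induction k with
  | zero => intro h; exact h 0 le_rfl
  | succ k ih =>
    intro h
    exact vee_le A (ih fun j hj => h j (le_trans hj (Nat.le_succ k)))
      (h (k + 1) le_rfl)

lemma m_joinUpTo_le (A : MVAlgebra M) {m : M → ℝ} (hm : IsMeasure A m) (a_ : ℕ → M)
    (hb : ∀ k, m (a_ k) ≤ (1 / 2 : ℝ) ^ k) (n : ℕ) :
    ∀ k, m (joinUpTo A a_ n k) ≤ 2 * (1 / 2 : ℝ) ^ n - (1 / 2 : ℝ) ^ (n + k) := by
  intro k
  induction k with
  | zero =>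
    have := hb n
    show m (a_ n) ≤ _
    simp only [Nat.add_zero]
    linarith
  | succ k ih =>
    have h1 := m_vee_le A hm (joinUpTo A a_ n k) (a_ (n + k + 1))
    have h2 := hb (n + k + 1)
    have h3 : (1 / 2 : ℝ) ^ (n + k) = 2 * (1 / 2 : ℝ) ^ (n + k + 1) := by
      rw [pow_succ]; ring
    have h4 : (1 / 2 : ℝ) ^ (n + (k + 1)) = (1 / 2 : ℝ) ^ (n + k + 1) := by ring_nf
    show m (vee A (joinUpTo A a_ n k) (a_ (n + k + 1))) ≤ _
    rw [h4]
    linarith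

end MVAux

/-- For two σ-additive measures `s₁, s₂` on a σ-complete MV-algebra,
`s₁ ≪ s₂` if and only if `s₁ ≪_ε s₂`. -/
theorem stmt16 {M : Type u} (A : MVAlgebra M) (hσ : SigmaComplete A)
    (s₁ s₂ : M → ℝ) (h₁ : IsMeasure A s₁) (h₂ : IsMeasure A s₂)
    (hσ₁ : SigmaAdditive A s₁) (hσ₂ : SigmaAdditive A s₂) :
    (∀ a : M, s₂ a = 0 → s₁ a = 0) ↔
    (∀ ε : ℝ, 0 < ε → ∃ δ : ℝ, 0 < δ ∧ ∀ a : M, s₂ a < δ → s₁ a < ε) := by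
  constructor
  · intro h
    by_contra hcon
    push_neg at hcon
    obtain ⟨ε, hε, hA⟩ := hcon
    -- hA : ∀ δ, 0 < δ → ∃ a, s₂ a < δ ∧ ε ≤ s₁ a
    set a_ : ℕ → M := fun n => (hA ((1/2 : ℝ)^n) (by positivity)).choose with ha_def
    have ha2 : ∀ n, s₂ (a_ n) ≤ (1/2 : ℝ)^n :=
      fun n => le_of_lt (hA ((1/2 : ℝ)^n) (by positivity)).choose_spec.1
    have ha1 : ∀ n, ε ≤ s₁ (a_ n) :=
      fun n => (hA ((1/2 : ℝ)^n) (by positivity)).choose_spec.2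
    set c : ℕ → ℕ → M := fun n => MVAux.joinUpTo A a_ n with hc_def
    have hsup : ∀ n, ∃ s, IsLUBmv A (Set.range (c n)) s := fun n => hσ (c n)
    set b : ℕ → M := fun n => (hsup n).choose with hb_def
    have hb : ∀ n, IsLUBmv A (Set.range (c n)) (b n) := fun n => (hsup n).choose_spec
    have hmono : ∀ n k, A.le (c n k) (c n (k+1)) := fun n k => MVAux.joinUpTo_mono A a_ n k
    have htend2 : ∀ n, Filter.Tendsto (fun k => s₂ (c n k)) Filter.atTop (nhds (s₂ (b n))) :=
      fun n => hσ₂ (c n) (b n) (hmono n) (hb n)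
    have hbound : ∀ n, s₂ (b n) ≤ 2 * (1/2 : ℝ)^n := by
      intro n
      apply le_of_tendsto (htend2 n)
      apply Filter.Eventually.of_forall
      intro k
      have h5 := MVAux.m_joinUpTo_le A h₂ a_ ha2 n k
      have h6 : (0:ℝ) ≤ (1/2 : ℝ)^(n+k) := by positivity
      calc s₂ (c n k) ≤ 2 * (1/2 : ℝ)^n - (1/2 : ℝ)^(n+k) := h5
        _ ≤ 2 * (1/2 : ℝ)^n := by linarith
    have hblow : ∀ n, ε ≤ s₁ (b n) := by
      intro n
      have h1' : A.le (a_ n) (b n) := (hb n).1 (c n 0) ⟨0, rfl⟩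
      exact le_trans (ha1 n) (MVAux.m_mono A h₁ h1')
    have hdec : ∀ n, A.le (b (n+1)) (b n) := by
      intro n
      apply (hb (n+1)).2
      rintro x ⟨k, rfl⟩
      apply MVAux.joinUpTo_le
      intro j _
      have hj1 : A.le (a_ (n + (j+1))) (c n (j+1)) := MVAux.le_joinUpTo A a_ n (j+1) (j+1) le_rfl
      have hj2 : A.le (c n (j+1)) (b n) := (hb n).1 _ ⟨j+1, rfl⟩
      have heq : n + 1 + j = n + (j + 1) := by omega
      rw [heq]
      exact MVAux.le_trans' A hj1 hj2
    set d : ℕ → M := fun n => A.neg (b n) with hd_def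
    have hdmono : ∀ n, A.le (d n) (d (n+1)) := fun n => (MVAux.le_neg_iff A _ _).mpr (hdec n)
    obtain ⟨b', hb'⟩ := hσ d
    have htd1 : Filter.Tendsto (fun n => s₁ (d n)) Filter.atTop (nhds (s₁ b')) :=
      hσ₁ d b' hdmono hb'
    have htd2 : Filter.Tendsto (fun n => s₂ (d n)) Filter.atTop (nhds (s₂ b')) :=
      hσ₂ d b' hdmono hb'
    set B := A.neg b' with hB_def
    have key : ∀ (m : M → ℝ), IsMeasure A m →
        Filter.Tendsto (fun n => m (d n)) Filter.atTop (nhds (m b')) →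
        Filter.Tendsto (fun n => m (b n)) Filter.atTop (nhds (m B)) := by
      intro m hm ht
      have e1 : ∀ n, m (b n) = m A.one - m (d n) := by
        intro n
        have := MVAux.m_neg_add A hm (b n)
        simp only [hd_def]
        linarith
      have e2 : m B = m A.one - m b' := by
        have := MVAux.m_neg_add A hm b'
        simp only [hB_def]
        linarith
      simp only [e1, e2]
      exact tendsto_const_nhds.sub ht
    have hB2 : s₂ B = 0 := by
      have hup := key s₂ h₂ htd2
      have hzero : Filter.Tendsto (fun n : ℕ => 2 * (1/2 : ℝ)^n) Filter.atTop (nhds 0) := by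
        have hp := tendsto_pow_atTop_nhds_zero_of_lt_one
          (by norm_num : (0:ℝ) ≤ 1/2) (by norm_num : (1/2 : ℝ) < 1)
        have := hp.const_mul 2
        simpa using this
      have hle := le_of_tendsto_of_tendsto' hup hzero hbound
      have hge := h₂.1 B
      linarith
    have hB1 := h B hB2
    have hge : ε ≤ s₁ B :=
      ge_of_tendsto (key s₁ h₁ htd1) (Filter.Eventually.of_forall hblow)
    linarith
  · intro h a ha
    have h0 : ∀ ε, 0 < ε → s₁ a < ε := by
      intro ε hε
      obtain ⟨δ, hδ, hd⟩ := h ε hε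
      exact hd a (by rw [ha]; exact hδ)
    have hnn := h₁.1 a
    by_contra hne
    have hpos : 0 < s₁ a := lt_of_le_of_ne hnn (Ne.symm hne)
    exact absurd (h0 (s₁ a) hpos) (lt_irrefl _)
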